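/- arXiv:2605.21881 — 2 statements merged into one kernel-verified Lean document; each statement's English description precedes it below -/
import Mathlib

section
/- Let v be a reduced state function that is a self-similar weak solution of u_t + f(u)_x = 0, and let ξ⋆ ∈ ℝ be an ess-im discontinuity point of v. Then there exist u⁻ ∈ A⁻(v; ξ⋆) and u⁺ ∈ A⁺(v; ξ⋆) with u⁺ ≠ u⁻, and for any such pair the matrix M(u⁻, ξ⋆, u⁺) := −ξ⋆ I + ∫₀¹ A((1−τ) u⁻ + τ u⁺) dτ is singular: det M(u⁻, ξ⋆, u⁺) = 0. -/
open MeasureTheory Set Matrix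

noncomputable section

/-- The essential image of `h` restricted to `Y`: the set of `z` every neighborhood of
which has preimage of positive measure inside `Y`. -/
def essimOn {α : Type*} [MeasureSpace α] {n : ℕ}
    (h : α → (Fin n → ℝ)) (Y : Set α) : Set (Fin n → ℝ) :=
  {z | ∀ V : Set (Fin n → ℝ), IsOpen V → z ∈ V → 0 < volume (h ⁻¹' V ∩ Y)}

/-- Left ess-im accumulation set of `v` at `ξ`. -/
def AessL {n : ℕ} (v : ℝ → (Fin n → ℝ)) (ξ : ℝ) : Set (Fin n → ℝ) :=
  ⋂ r > (0:ℝ), essimOn v (Set.Ioo (ξ - r) ξ)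

/-- Right ess-im accumulation set of `v` at `ξ`. -/
def AessR {n : ℕ} (v : ℝ → (Fin n → ℝ)) (ξ : ℝ) : Set (Fin n → ℝ) :=
  ⋂ r > (0:ℝ), essimOn v (Set.Ioo ξ (ξ + r))

/-- Two-sided ess-im accumulation set of `v` at `ξ`. -/
def Aess {n : ℕ} (v : ℝ → (Fin n → ℝ)) (ξ : ℝ) : Set (Fin n → ℝ) :=
  ⋂ r > (0:ℝ), essimOn v (Set.Ioo (ξ - r) (ξ + r))

/-- `ξ` is an ess-im continuity point of `v`. -/
def EssImContPt {n : ℕ} (v : ℝ → (Fin n → ℝ)) (ξ : ℝ) : Prop :=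
  ∃ z : Fin n → ℝ, AessL v ξ = {z} ∧ AessR v ξ = {z}

/-- Strictly hyperbolic region: states `u ∈ U` where `A(u) = Df(u)` has `n` distinct
real eigenvalues. -/
def USH {n : ℕ} (f : (Fin n → ℝ) → (Fin n → ℝ)) (U : Set (Fin n → ℝ)) :
    Set (Fin n → ℝ) :=
  {u | u ∈ U ∧ ∃ lam : Fin n → ℝ, Function.Injective lam ∧
    ∀ i, Module.End.HasEigenvalue
      ((fderiv ℝ f u).toLinearMap : Module.End ℝ (Fin n → ℝ)) (lam i)}

/-- A reduced state function: essentially bounded measurable `v : ℝ → ℝⁿ` with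
essential image contained in the strictly hyperbolic region. -/
def IsReducedState {n : ℕ} (f : (Fin n → ℝ) → (Fin n → ℝ)) (U : Set (Fin n → ℝ))
    (v : ℝ → (Fin n → ℝ)) : Prop :=
  Measurable v ∧ (∃ C : ℝ, ∀ᵐ ξ : ℝ ∂volume, ‖v ξ‖ ≤ C) ∧
    essimOn v Set.univ ⊆ USH f U

/-- `v` is a self-similar weak solution of `u_t + f(u)_x = 0`. -/
def IsSSWeakSol {n : ℕ} (f : (Fin n → ℝ) → (Fin n → ℝ)) (v : ℝ → (Fin n → ℝ)) : Prop :=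
  ∀ ψ : ℝ → (Fin n → ℝ), ContDiff ℝ 1 ψ → HasCompactSupport ψ →
    ∫ ξ : ℝ, ((deriv ψ ξ) ⬝ᵥ ((-ξ) • v ξ + f (v ξ)) - (ψ ξ) ⬝ᵥ (v ξ)) = 0

/-- `det (−ξ I + Df(u))`. -/
def detShift {n : ℕ} (f : (Fin n → ℝ) → (Fin n → ℝ)) (ξ : ℝ) (u : Fin n → ℝ) : ℝ :=
  LinearMap.det (-(ξ • (LinearMap.id : (Fin n → ℝ) →ₗ[ℝ] (Fin n → ℝ)))
    + (fderiv ℝ f u).toLinearMap)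

/-- The averaged matrix `M(u⁻, ξ, u⁺) = −ξ I + ∫₀¹ Df((1−τ)u⁻ + τu⁺) dτ`. -/
def Mmat {n : ℕ} (f : (Fin n → ℝ) → (Fin n → ℝ)) (um : Fin n → ℝ) (ξ : ℝ)
    (up : Fin n → ℝ) : (Fin n → ℝ) →L[ℝ] (Fin n → ℝ) :=
  -(ξ • (1 : (Fin n → ℝ) →L[ℝ] (Fin n → ℝ))) +
    ∫ τ in (0:ℝ)..(1:ℝ), fderiv ℝ f ((1 - τ) • um + τ • up)


section Aux
variable {n : ℕ}

lemma essimOn_closed (h : ℝ → (Fin n → ℝ)) (Y : Set ℝ) : IsClosed (essimOn h Y) := by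
  rw [← isOpen_compl_iff, isOpen_iff_forall_mem_open]
  intro z hz
  simp only [essimOn, mem_compl_iff, mem_setOf_eq, not_forall] at hz
  obtain ⟨V, hVopen, hzV, hV⟩ := hz
  refine ⟨V, fun y hy => ?_, hVopen, hzV⟩
  simp only [essimOn, mem_compl_iff, mem_setOf_eq, not_forall]
  exact ⟨V, hVopen, hy, hV⟩

lemma essimOn_mono (h : ℝ → (Fin n → ℝ)) {Y Y' : Set ℝ} (hYY : Y ⊆ Y') :
    essimOn h Y ⊆ essimOn h Y' := by
  intro z hz V hVopen hzV
  exact lt_of_lt_of_le (hz V hVopen hzV) (measure_mono (inter_subset_inter_right _ hYY))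

lemma essimOn_subset_closedBall (h : ℝ → (Fin n → ℝ)) (Y : Set ℝ) {C : ℝ}
    (hC : ∀ᵐ ξ : ℝ ∂volume, ‖h ξ‖ ≤ C) :
    essimOn h Y ⊆ Metric.closedBall 0 C := by
  intro z hz
  by_contra hznot
  simp only [Metric.mem_closedBall, dist_zero_right, not_le] at hznot
  have hVopen : IsOpen {u : Fin n → ℝ | C < ‖u‖} := isOpen_lt continuous_const continuous_norm
  have hpos := hz _ hVopen hznot
  have hCnull : volume {ξ : ℝ | ¬ ‖h ξ‖ ≤ C} = 0 := by simpa [ae_iff] using hC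
  have hnull : volume (h ⁻¹' {u : Fin n → ℝ | C < ‖u‖} ∩ Y) = 0 := by
    refine measure_mono_null (fun ξ hξ => ?_) hCnull
    simp only [mem_inter_iff, mem_preimage, mem_setOf_eq] at hξ ⊢
    exact not_le.mpr hξ.1
  exact (ne_of_gt hpos) hnull

lemma ae_mem_essimOn (h : ℝ → (Fin n → ℝ)) :
    ∀ᵐ ξ : ℝ ∂volume, h ξ ∈ essimOn h Set.univ := by
  obtain ⟨b, hbcount, -, hbbasis⟩ := TopologicalSpace.exists_countable_basis (Fin n → ℝ)
  set 𝒞 : Set (Set (Fin n → ℝ)) := {B ∈ b | volume (h ⁻¹' B) = 0} with h𝒞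
  have hnull : volume (h ⁻¹' ⋃₀ 𝒞) = 0 := by
    rw [sUnion_eq_biUnion, preimage_iUnion₂]
    rw [measure_biUnion_null_iff (hbcount.mono (sep_subset _ _))]
    exact fun B hB => hB.2
  refine measure_mono_null (fun ξ hξ => ?_) hnull
  simp only [mem_setOf_eq, mem_compl_iff] at hξ
  have hξ' : h ξ ∉ essimOn h Set.univ := hξ
  simp only [essimOn, mem_setOf_eq, not_forall] at hξ'
  obtain ⟨V, hVopen, hmem, hV⟩ := hξ'
  have hV0 : volume (h ⁻¹' V) = 0 := by
    rw [inter_univ] at hV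
    simpa using le_antisymm (le_of_not_gt hV) (zero_le)
  obtain ⟨B, hBb, hzB, hBV⟩ := hbbasis.exists_subset_of_mem_open hmem hVopen
  refine mem_preimage.mpr (mem_sUnion.mpr ⟨B, ⟨hBb, ?_⟩, hzB⟩)
  exact measure_mono_null (preimage_mono hBV) hV0

lemma essimOn_nonempty (h : ℝ → (Fin n → ℝ)) {Y : Set ℝ} {C : ℝ}
    (hC : ∀ᵐ ξ : ℝ ∂volume, ‖h ξ‖ ≤ C) (hY : 0 < volume Y) :
    (essimOn h Y).Nonempty := by
  by_contra hempty
  rw [not_nonempty_iff_eq_empty] at hempty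
  set K : Set (Fin n → ℝ) := Metric.closedBall 0 C with hK
  have hchoice : ∀ z : Fin n → ℝ, ∃ V : Set (Fin n → ℝ),
      IsOpen V ∧ z ∈ V ∧ volume (h ⁻¹' V ∩ Y) = 0 := by
    intro z
    have : z ∉ essimOn h Y := by rw [hempty]; exact notMem_empty z
    simp only [essimOn, mem_setOf_eq, not_forall] at this
    obtain ⟨V, hVopen, hzV, hV⟩ := this
    exact ⟨V, hVopen, hzV, le_antisymm (le_of_not_gt hV) (zero_le)⟩
  choose V hVopen hVmem hVnull using hchoice
  have hKcompact : IsCompact K := isCompact_closedBall 0 C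
  obtain ⟨t, -, htfin, hcover⟩ := hKcompact.elim_finite_subcover_image
    (fun z (_ : z ∈ K) => hVopen z) (fun z hz => mem_biUnion hz (hVmem z))
  have hnull : volume ((⋃ z ∈ t, h ⁻¹' V z ∩ Y) ∪ {ξ : ℝ | ¬ ‖h ξ‖ ≤ C}) = 0 := by
    rw [measure_union_null_iff]
    constructor
    · rw [measure_biUnion_null_iff htfin.countable]
      exact fun z _ => hVnull z
    · simpa [ae_iff] using hC
  have hsub : Y ⊆ (⋃ z ∈ t, h ⁻¹' V z ∩ Y) ∪ {ξ : ℝ | ¬ ‖h ξ‖ ≤ C} := by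
    intro ξ hξY
    by_cases hb : ‖h ξ‖ ≤ C
    · left
      have : h ξ ∈ K := by simpa [hK, Metric.mem_closedBall, dist_zero_right] using hb
      obtain ⟨z, hzt, hzV⟩ := mem_iUnion₂.mp (hcover this)
      exact mem_iUnion₂.mpr ⟨z, hzt, ⟨hzV, hξY⟩⟩
    · right; exact hb
  exact absurd (measure_mono_null hsub hnull) (ne_of_gt hY)

end Aux


section Aux2
variable {n : ℕ} {v : ℝ → (Fin n → ℝ)} {ξ : ℝ} {C : ℝ}

lemma AessL_subset : AessL v ξ ⊆ essimOn v Set.univ := by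
  intro z hz
  have := mem_iInter₂.mp hz 1 one_pos
  exact essimOn_mono v (subset_univ _) this

lemma AessR_subset : AessR v ξ ⊆ essimOn v Set.univ := by
  intro z hz
  have := mem_iInter₂.mp hz 1 one_pos
  exact essimOn_mono v (subset_univ _) this

lemma AessL_nonempty (hC : ∀ᵐ ξ : ℝ ∂volume, ‖v ξ‖ ≤ C) : (AessL v ξ).Nonempty := by
  set S : ℕ → Set (Fin n → ℝ) := fun k => essimOn v (Set.Ioo (ξ - 1/(k+1)) ξ) with hS
  have hsub : ∀ k, S (k+1) ⊆ S k := by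
    intro k
    apply essimOn_mono
    apply Ioo_subset_Ioo_left
    have : (1:ℝ)/(k+1+1) ≤ 1/(k+1) := by
      apply one_div_le_one_div_of_le <;> push_cast <;> linarith
    push_cast
    linarith
  have hne : ∀ k, (S k).Nonempty := by
    intro k
    apply essimOn_nonempty v hC
    rw [Real.volume_Ioo]
    have : (0:ℝ) < 1/(k+1) := by positivity
    apply ENNReal.ofReal_pos.mpr
    linarith
  have hclosed : ∀ k, IsClosed (S k) := fun k => essimOn_closed v _
  have hcpt : IsCompact (S 0) := by
    apply (isCompact_closedBall (0 : Fin n → ℝ) C).of_isClosed_subset (hclosed 0)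
    exact essimOn_subset_closedBall v _ hC
  obtain ⟨z, hz⟩ := IsCompact.nonempty_iInter_of_sequence_nonempty_isCompact_isClosed
    S hsub hne hcpt hclosed
  refine ⟨z, mem_iInter₂.mpr fun r hr => ?_⟩
  obtain ⟨k, hk⟩ := exists_nat_one_div_lt hr
  have := mem_iInter.mp hz k
  apply essimOn_mono v _ this
  apply Ioo_subset_Ioo_left
  linarith

lemma AessR_nonempty (hC : ∀ᵐ ξ : ℝ ∂volume, ‖v ξ‖ ≤ C) : (AessR v ξ).Nonempty := by
  set S : ℕ → Set (Fin n → ℝ) := fun k => essimOn v (Set.Ioo ξ (ξ + 1/(k+1))) with hS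
  have hsub : ∀ k, S (k+1) ⊆ S k := by
    intro k
    apply essimOn_mono
    apply Ioo_subset_Ioo_right
    have : (1:ℝ)/(k+1+1) ≤ 1/(k+1) := by
      apply one_div_le_one_div_of_le <;> push_cast <;> linarith
    push_cast
    linarith
  have hne : ∀ k, (S k).Nonempty := by
    intro k
    apply essimOn_nonempty v hC
    rw [Real.volume_Ioo]
    have : (0:ℝ) < 1/(k+1) := by positivity
    apply ENNReal.ofReal_pos.mpr
    linarith
  have hclosed : ∀ k, IsClosed (S k) := fun k => essimOn_closed v _
  have hcpt : IsCompact (S 0) := by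
    apply (isCompact_closedBall (0 : Fin n → ℝ) C).of_isClosed_subset (hclosed 0)
    exact essimOn_subset_closedBall v _ hC
  obtain ⟨z, hz⟩ := IsCompact.nonempty_iInter_of_sequence_nonempty_isCompact_isClosed
    S hsub hne hcpt hclosed
  refine ⟨z, mem_iInter₂.mpr fun r hr => ?_⟩
  obtain ⟨k, hk⟩ := exists_nat_one_div_lt hr
  have := mem_iInter.mp hz k
  apply essimOn_mono v _ this
  apply Ioo_subset_Ioo_right
  linarith

end Aux2


section DBR

/-- Primitive of a continuous compactly supported function with zero total integral is a
`C¹` compactly supported function. -/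
lemma exists_primitive_hasCompactSupport {h' : ℝ → ℝ} (hcont : Continuous h')
    (hsupp : HasCompactSupport h') (hzero : ∫ t : ℝ, h' t = 0) :
    ∃ Φ : ℝ → ℝ, ContDiff ℝ 1 Φ ∧ HasCompactSupport Φ ∧ deriv Φ = h' := by
  obtain ⟨r, hr⟩ := hsupp.isBounded.subset_closedBall 0
  set R : ℝ := max r 0 with hRdef
  have hrR : r ≤ R := le_max_left r 0
  have hR : tsupport h' ⊆ Icc (-R) R := by
    refine hr.trans ?_
    rw [Real.closedBall_eq_Icc]
    exact Icc_subset_Icc (by simp; linarith) (by simp; linarith)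
  set a : ℝ := -R - 1 with ha
  set Φ : ℝ → ℝ := fun x => ∫ t in a..x, h' t with hΦ
  have hD : ∀ x, HasDerivAt Φ (h' x) x := by
    intro x
    exact (intervalIntegral.integral_hasStrictDerivAt_right
      (hcont.intervalIntegrable _ _)
      hcont.stronglyMeasurable.stronglyMeasurableAtFilter hcont.continuousAt).hasDerivAt
  have hderiv : deriv Φ = h' := funext fun x => (hD x).deriv
  refine ⟨Φ, ?_, ?_, hderiv⟩
  · exact contDiff_one_iff_deriv.mpr ⟨fun x => (hD x).differentiableAt, hderiv ▸ hcont⟩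
  · refine HasCompactSupport.intro (isCompact_Icc (a := -R - 1) (b := R + 1)) ?_
    intro x hx
    simp only [mem_Icc, not_and_or, not_le] at hx
    rcases hx with hx | hx
    · have : EqOn h' 0 (Set.uIcc a x) := by
        intro t ht
        rw [Set.uIcc_of_ge (by linarith : x ≤ a)] at ht
        apply image_eq_zero_of_notMem_tsupport
        intro hmem
        have := hR hmem
        simp only [mem_Icc] at this ht
        linarith
      rw [hΦ]
      simp only
      rw [intervalIntegral.integral_congr this]
      simp
    · have hsub : Function.support h' ⊆ Ioc a x := by
        refine (subset_tsupport h').trans (hR.trans ?_)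
        intro t ht
        rw [mem_Icc] at ht
        exact ⟨by linarith [ht.1], by linarith [ht.2]⟩
      rw [hΦ]
      simp only
      rw [intervalIntegral.integral_eq_integral_of_support_subset hsub, hzero]

/-- du Bois-Reymond: a locally integrable function whose distributional derivative
vanishes is a.e. constant. -/
lemma exists_ae_const_of_integral_deriv_mul_eq_zero {G : ℝ → ℝ}
    (hG : MeasureTheory.LocallyIntegrable G volume)
    (h : ∀ φ : ℝ → ℝ, ContDiff ℝ 1 φ → HasCompactSupport φ →
      ∫ ξ : ℝ, deriv φ ξ * G ξ = 0) :
    ∃ c : ℝ, ∀ᵐ ξ : ℝ ∂volume, G ξ = c := by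
  set bump : ContDiffBump (0:ℝ) := ⟨1, 2, one_pos, one_lt_two⟩ with hbump
  set χ : ℝ → ℝ := bump.normed volume with hχ
  have hχcont : Continuous χ := bump.continuous_normed
  have hχsupp : HasCompactSupport χ := bump.hasCompactSupport_normed (μ := volume)
  have hχint : ∫ t : ℝ, χ t = 1 := bump.integral_normed (μ := volume)
  set c : ℝ := ∫ t : ℝ, χ t * G t with hc
  have hmulint : ∀ φ : ℝ → ℝ, Continuous φ → HasCompactSupport φ →
      MeasureTheory.Integrable (fun t => φ t * G t) volume := by
    intro φ hφc hφs
    simpa [smul_eq_mul] using hG.integrable_smul_left_of_hasCompactSupport hφc hφs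
  have key : ∀ φ : ℝ → ℝ, ContDiff ℝ 1 φ → HasCompactSupport φ →
      ∫ t : ℝ, φ t * G t = (∫ t : ℝ, φ t) * c := by
    intro φ hφ hφs
    set I : ℝ := ∫ t : ℝ, φ t with hI
    set h' : ℝ → ℝ := fun t => φ t - I * χ t with hh'
    have hh'cont : Continuous h' := hφ.continuous.sub (continuous_const.mul hχcont)
    have hh'supp : HasCompactSupport h' := by
      apply HasCompactSupport.intro (hφs.union hχsupp)
      intro x hx
      simp only [mem_union, not_or] at hx
      simp [hh', image_eq_zero_of_notMem_tsupport hx.1, image_eq_zero_of_notMem_tsupport hx.2]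
    have hφint : MeasureTheory.Integrable φ volume :=
      hφ.continuous.integrable_of_hasCompactSupport hφs
    have hχint' : MeasureTheory.Integrable χ volume :=
      hχcont.integrable_of_hasCompactSupport hχsupp
    have hh'zero : ∫ t : ℝ, h' t = 0 := by
      rw [hh']
      simp only
      rw [MeasureTheory.integral_sub hφint (hχint'.const_mul I),
        MeasureTheory.integral_const_mul, hχint]
      simp [hI]
    obtain ⟨Φ, hΦ1, hΦs, hΦd⟩ := exists_primitive_hasCompactSupport hh'cont hh'supp hh'zero
    have h0 := h Φ hΦ1 hΦs
    rw [hΦd] at h0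
    have hsplit : ∫ t : ℝ, h' t * G t
        = (∫ t : ℝ, φ t * G t) - I * ∫ t : ℝ, χ t * G t := by
      rw [← MeasureTheory.integral_const_mul,
        ← MeasureTheory.integral_sub (hmulint φ hφ.continuous hφs)
          ((hmulint χ hχcont hχsupp).const_mul I)]
      congr 1 with t
      simp only [hh']
      ring
    rw [hsplit, ← hc] at h0
    linarith [h0]
  refine ⟨c, ?_⟩
  have hgoal : ∀ᵐ x : ℝ ∂volume, G x - c = 0 := by
    apply ae_eq_zero_of_integral_contDiff_smul_eq_zero
      (hG.sub (MeasureTheory.locallyIntegrable_const c))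
    intro g hg hgs
    have hgint : MeasureTheory.Integrable g volume :=
      hg.continuous.integrable_of_hasCompactSupport hgs
    have h1 := key g (hg.of_le (by exact_mod_cast le_top)) hgs
    show ∫ x : ℝ, g x • (G x - c) = 0
    have heq : ∫ x : ℝ, g x • (G x - c) = ∫ x : ℝ, (g x * G x - g x * c) := by
      congr 1 with x
      simp only [smul_eq_mul]
      ring
    rw [heq, MeasureTheory.integral_sub (hmulint g hg.continuous hgs) (hgint.mul_const c),
      h1, MeasureTheory.integral_mul_const]
    ring
  filter_upwards [hgoal] with ξ hξ
  linarith [hξ]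

end DBR

section IBP

lemma locallyIntegrable_of_ae_bound {b : ℝ → ℝ} (hbm : Measurable b) {C : ℝ}
    (hC : ∀ᵐ t : ℝ ∂volume, |b t| ≤ C) :
    MeasureTheory.LocallyIntegrable b volume := by
  intro x
  refine ⟨Metric.ball x 1, Metric.ball_mem_nhds x one_pos, ?_⟩
  apply Measure.integrableOn_of_bounded (M := C) (measure_ball_lt_top).ne
    hbm.aestronglyMeasurable
  exact ae_restrict_of_ae (by simpa [Real.norm_eq_abs] using hC)

lemma intervalIntegrable_of_locallyIntegrable {b : ℝ → ℝ}
    (hb : MeasureTheory.LocallyIntegrable b volume) (a c : ℝ) :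
    IntervalIntegrable b volume a c := by
  rw [intervalIntegrable_iff]
  exact (hb.integrableOn_isCompact isCompact_uIcc).mono_set Set.uIoc_subset_uIcc

lemma exists_Rsupp {φ : ℝ → ℝ} (hφs : HasCompactSupport φ) :
    ∃ R : ℝ, 0 < R ∧ tsupport φ ⊆ Ioo (-R) R := by
  obtain ⟨r, hr⟩ := hφs.isBounded.subset_closedBall 0
  refine ⟨max r 0 + 1, by positivity, ?_⟩
  refine hr.trans ?_
  rw [Real.closedBall_eq_Icc]
  intro t ht
  rw [mem_Icc] at ht
  constructor
  · have := le_max_left r 0; simp at ht ⊢; nlinarith [ht.1]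
  · have := le_max_left r 0; simp at ht ⊢; nlinarith [ht.2]

lemma integral_deriv_eq_zero {φ : ℝ → ℝ} (hφ : ContDiff ℝ 1 φ) (hφs : HasCompactSupport φ) :
    ∫ x : ℝ, deriv φ x = 0 := by
  obtain ⟨R, hRpos, hR⟩ := exists_Rsupp hφs
  have hd : Continuous (deriv φ) := (contDiff_one_iff_deriv.mp hφ).2
  have hsub : Function.support (deriv φ) ⊆ Ioc (-R) R := by
    refine (support_deriv_subset.trans hR).trans Ioo_subset_Ioc_self
  rw [← intervalIntegral.integral_eq_integral_of_support_subset hsub]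
  rw [intervalIntegral.integral_deriv_eq_sub
    (fun x _ => (hφ.differentiable one_ne_zero).differentiableAt) (hd.intervalIntegrable _ _)]
  have h1 : φ R = 0 := image_eq_zero_of_notMem_tsupport (fun hc => by
    have := hR hc; rw [mem_Ioo] at this; linarith [this.2])
  have h2 : φ (-R) = 0 := image_eq_zero_of_notMem_tsupport (fun hc => by
    have := hR hc; rw [mem_Ioo] at this; linarith [this.1])
  rw [h1, h2, sub_zero]

/-- Integration by parts against a primitive of a bounded measurable function. -/
lemma integral_deriv_mul_primitive {b : ℝ → ℝ} (hbm : Measurable b) {C : ℝ}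
    (hCnn : 0 ≤ C) (hC : ∀ᵐ t : ℝ ∂volume, |b t| ≤ C)
    {φ : ℝ → ℝ} (hφ : ContDiff ℝ 1 φ) (hφs : HasCompactSupport φ) :
    ∫ ξ : ℝ, deriv φ ξ * (∫ t in (0:ℝ)..ξ, b t) = - ∫ ξ : ℝ, φ ξ * b ξ := by
  obtain ⟨R, hRpos, hR⟩ := exists_Rsupp hφs
  have hd : Continuous (deriv φ) := (contDiff_one_iff_deriv.mp hφ).2
  have hds : HasCompactSupport (deriv φ) := hφs.deriv
  have hbl : MeasureTheory.LocallyIntegrable b volume := locallyIntegrable_of_ae_bound hbm hC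
  have hbi : ∀ a c : ℝ, IntervalIntegrable b volume a c :=
    fun a c => intervalIntegrable_of_locallyIntegrable hbl a c
  obtain ⟨M, hM⟩ : ∃ M : ℝ, ∀ x : ℝ, |deriv φ x| ≤ M := by
    obtain ⟨M₀, hM₀⟩ := (hds.isCompact).exists_bound_of_continuousOn hd.continuousOn
    refine ⟨max M₀ 0, fun x => ?_⟩
    by_cases hx : x ∈ tsupport (deriv φ)
    · exact le_trans (by simpa [Real.norm_eq_abs] using hM₀ x hx) (le_max_left _ _)
    · simp [image_eq_zero_of_notMem_tsupport hx, le_max_right M₀ 0]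
  have hMnn : 0 ≤ M := le_trans (abs_nonneg _) (hM 0)
  set A : ℝ → ℝ := (Ioc (-R) R).indicator (deriv φ) with hA
  set B : ℝ → ℝ := (Ioc (-R) R).indicator b with hB
  set u : ℝ × ℝ → ℝ := fun p => A p.1 * (Iic p.1).indicator B p.2 with hu
  have hts : tsupport φ ⊆ Ioc (-R) R := hR.trans Ioo_subset_Ioc_self
  have hderiv0 : ∀ ξ : ℝ, ξ ∉ Ioc (-R) R → deriv φ ξ = 0 := by
    intro ξ hξ
    by_contra hne
    exact hξ (hts (support_deriv_subset (Function.mem_support.mpr hne)))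
  have hφ0 : ∀ ξ : ℝ, ξ ∉ Ioc (-R) R → φ ξ = 0 := by
    intro ξ hξ
    exact image_eq_zero_of_notMem_tsupport (fun hc => hξ (hts hc))
  -- inner integral in t
  have hinner : ∀ ξ : ℝ, (∫ t : ℝ, u (ξ, t)) = deriv φ ξ * ∫ t in (-R)..ξ, b t := by
    intro ξ
    by_cases hξ : ξ ∈ Ioc (-R) R
    · have hAξ : A ξ = deriv φ ξ := indicator_of_mem hξ _
      have : ∀ t : ℝ, u (ξ, t) = A ξ * ((Iic ξ ∩ Ioc (-R) R).indicator b) t := by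
        intro t
        show A ξ * (Iic ξ).indicator B t = _
        rw [hB, indicator_indicator]
      rw [MeasureTheory.integral_congr_ae (Filter.Eventually.of_forall this),
        MeasureTheory.integral_const_mul, hAξ]
      congr 1
      have hset : Iic ξ ∩ Ioc (-R) R = Ioc (-R) ξ := by
        ext t
        simp only [mem_inter_iff, mem_Iic, mem_Ioc] at *
        rcases hξ with ⟨h1, h2⟩
        constructor
        · rintro ⟨ht, h3, _⟩; exact ⟨h3, ht⟩
        · rintro ⟨h3, ht⟩; exact ⟨ht, h3, le_trans ht h2⟩
      rw [hset, MeasureTheory.integral_indicator measurableSet_Ioc,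
        intervalIntegral.integral_of_le (le_of_lt hξ.1)]
    · have hAξ : A ξ = 0 := indicator_of_notMem hξ _
      have : ∀ t : ℝ, u (ξ, t) = 0 := by
        intro t
        show A ξ * (Iic ξ).indicator B t = 0
        rw [hAξ, zero_mul]
      rw [MeasureTheory.integral_congr_ae (Filter.Eventually.of_forall this)]
      simp [hderiv0 ξ hξ]
  -- inner integral in ξ after swap
  have houter : ∀ t : ℝ, (∫ ξ : ℝ, u (ξ, t)) = -(φ t * B t) := by
    intro t
    have hswap : ∀ ξ : ℝ, u (ξ, t) = B t * (Ici t).indicator A ξ := by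
      intro ξ
      show A ξ * (Iic ξ).indicator B t = B t * (Ici t).indicator A ξ
      by_cases h : t ≤ ξ
      · rw [indicator_of_mem (mem_Iic.mpr h), indicator_of_mem (mem_Ici.mpr h)]; ring
      · rw [indicator_of_notMem (fun hc => h (mem_Iic.mp hc)),
          indicator_of_notMem (fun hc => h (mem_Ici.mp hc))]
        ring
    rw [MeasureTheory.integral_congr_ae (Filter.Eventually.of_forall hswap),
      MeasureTheory.integral_const_mul]
    by_cases ht : t ∈ Ioc (-R) R
    · have hBt : B t = b t := indicator_of_mem ht _
      have hset : Ici t ∩ Ioc (-R) R = Icc t R := by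
        ext s
        simp only [mem_inter_iff, mem_Ici, mem_Ioc, mem_Icc] at *
        rcases ht with ⟨h1, _⟩
        constructor
        · rintro ⟨hs, _, hs3⟩; exact ⟨hs, hs3⟩
        · rintro ⟨hs, hs3⟩; exact ⟨hs, lt_of_lt_of_le h1 hs, hs3⟩
      have : ∫ ξ : ℝ, (Ici t).indicator A ξ = φ R - φ t := by
        rw [hA, indicator_indicator, hset, MeasureTheory.integral_indicator measurableSet_Icc,
          MeasureTheory.integral_Icc_eq_integral_Ioc,
          ← intervalIntegral.integral_of_le ht.2,
          intervalIntegral.integral_deriv_eq_sub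
            (fun x _ => (hφ.differentiable one_ne_zero).differentiableAt)
            (hd.intervalIntegrable _ _)]
      have hφR : φ R = 0 := image_eq_zero_of_notMem_tsupport
        (fun hc => by have := hR hc; rw [mem_Ioo] at this; linarith [this.2])
      rw [this, hφR, hBt]
      ring
    · have hBt : B t = 0 := indicator_of_notMem ht _
      rw [hBt]
      ring
  -- integrability of u on the product space
  have humeas : Measurable u := by
    have h1 : Measurable A := hd.measurable.indicator measurableSet_Ioc
    have h2 : Measurable B := hbm.indicator measurableSet_Ioc
    have hueq : u = fun p : ℝ × ℝ =>
        (A p.1) * ({q : ℝ × ℝ | q.2 ≤ q.1}.indicator (fun q => B q.2) p) := by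
      funext p
      show A p.1 * (Iic p.1).indicator B p.2 = _
      by_cases h : p.2 ≤ p.1
      · rw [indicator_of_mem (mem_Iic.mpr h), indicator_of_mem (show p ∈ {q : ℝ × ℝ | q.2 ≤ q.1} from h)]
      · rw [indicator_of_notMem (fun hc => h (mem_Iic.mp hc)),
          indicator_of_notMem (show p ∉ {q : ℝ × ℝ | q.2 ≤ q.1} from h)]
    rw [hueq]
    exact ((h1.comp measurable_fst).mul
      ((h2.comp measurable_snd).indicator (measurableSet_le measurable_snd measurable_fst)))
  have huint : MeasureTheory.Integrable u (volume : Measure (ℝ × ℝ)) := by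
    set g : ℝ × ℝ → ℝ := (Ioc (-R) R ×ˢ Ioc (-R) R).indicator (fun _ => M * C) with hg
    have hgint : MeasureTheory.Integrable g volume := by
      rw [hg, MeasureTheory.integrable_indicator_iff (measurableSet_Ioc.prod measurableSet_Ioc)]
      refine (MeasureTheory.integrableOn_const_iff (by finiteness)).mpr ?_
      right
      rw [Measure.volume_eq_prod, Measure.prod_prod, Real.volume_Ioc]
      exact ENNReal.mul_lt_top ENNReal.ofReal_lt_top ENNReal.ofReal_lt_top
    have hbound : ∀ᵐ p : ℝ × ℝ ∂volume, ‖u p‖ ≤ g p := by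
      have hnull : volume {p : ℝ × ℝ | ¬ |b p.2| ≤ C} = 0 := by
        have hN : volume {t : ℝ | ¬ |b t| ≤ C} = 0 := by simpa [ae_iff] using hC
        have : {p : ℝ × ℝ | ¬ |b p.2| ≤ C} = (univ : Set ℝ) ×ˢ {t : ℝ | ¬ |b t| ≤ C} := by
          ext p; simp [Set.mem_prod]
        rw [this, Measure.volume_eq_prod, Measure.prod_prod, hN, mul_zero]
      rw [MeasureTheory.ae_iff]
      apply measure_mono_null _ hnull
      intro p hp
      simp only [mem_setOf_eq, not_le] at hp ⊢
      by_contra hb2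
      push_neg at hb2
      refine absurd hp (not_lt.mpr ?_)
      show ‖A p.1 * (Iic p.1).indicator B p.2‖ ≤ g p
      by_cases h1 : p.1 ∈ Ioc (-R) R
      · by_cases h2 : p.2 ∈ Ioc (-R) R
        · have hgp : g p = M * C := indicator_of_mem (Set.mem_prod.mpr ⟨h1, h2⟩) _
          rw [hgp]
          simp only [Real.norm_eq_abs, abs_mul]
          apply mul_le_mul
          · rw [hA, indicator_of_mem h1]; exact hM _
          · by_cases h3 : p.2 ∈ Iic p.1
            · rw [indicator_of_mem h3, hB, indicator_of_mem h2]; exact hb2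
            · rw [indicator_of_notMem h3]; simpa using hCnn
          · exact abs_nonneg _
          · exact hMnn
        · have hz : (Iic p.1).indicator B p.2 = 0 := by
            by_cases h3 : p.2 ∈ Iic p.1
            · rw [indicator_of_mem h3, hB, indicator_of_notMem h2]
            · rw [indicator_of_notMem h3]
          rw [hz, mul_zero, norm_zero]
          exact indicator_nonneg (fun _ _ => by positivity) p
      · have hz : A p.1 = 0 := indicator_of_notMem h1 _
        rw [hz, zero_mul, norm_zero]
        exact indicator_nonneg (fun _ _ => by positivity) p
    exact MeasureTheory.Integrable.mono' hgint humeas.aestronglyMeasurable hbound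
  -- put the pieces together
  have hswapped := MeasureTheory.integral_integral_swap (f := fun ξ t => u (ξ, t))
    (by exact huint)
  have hIprim : Continuous (fun ξ : ℝ => ∫ t in (-R)..ξ, b t) :=
    intervalIntegral.continuous_primitive hbi (-R)
  have hstep1 : ∫ ξ : ℝ, deriv φ ξ * (∫ t in (0:ℝ)..ξ, b t)
      = (∫ ξ : ℝ, deriv φ ξ * (∫ t in (0:ℝ)..(-R), b t))
        + ∫ ξ : ℝ, deriv φ ξ * (∫ t in (-R)..ξ, b t) := by
    rw [← MeasureTheory.integral_add (f := fun ξ => deriv φ ξ * ∫ t in (0:ℝ)..(-R), b t)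
      (g := fun ξ => deriv φ ξ * ∫ t in (-R)..ξ, b t)
      ((hd.mul continuous_const).integrable_of_hasCompactSupport (hds.mul_right))
      ((hd.mul hIprim).integrable_of_hasCompactSupport (hds.mul_right))]
    congr 1 with ξ
    rw [← mul_add, intervalIntegral.integral_add_adjacent_intervals (hbi 0 (-R)) (hbi (-R) ξ)]
  have hstep2 : ∫ ξ : ℝ, deriv φ ξ * (∫ t in (0:ℝ)..(-R), b t) = 0 := by
    rw [MeasureTheory.integral_mul_const, integral_deriv_eq_zero hφ hφs, zero_mul]
  have hstep3 : ∫ ξ : ℝ, deriv φ ξ * (∫ t in (-R)..ξ, b t) = ∫ ξ : ℝ, ∫ t : ℝ, u (ξ, t) :=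
    (MeasureTheory.integral_congr_ae (Filter.Eventually.of_forall
      (fun ξ => (hinner ξ).symm)))
  have hstep4 : ∫ t : ℝ, ∫ ξ : ℝ, u (ξ, t) = - ∫ ξ : ℝ, φ ξ * b ξ := by
    rw [MeasureTheory.integral_congr_ae (Filter.Eventually.of_forall houter)]
    rw [MeasureTheory.integral_neg]
    congr 1
    apply MeasureTheory.integral_congr_ae (Filter.Eventually.of_forall _)
    intro t
    by_cases ht : t ∈ Ioc (-R) R
    · rw [hB, indicator_of_mem ht]
    · rw [hB, indicator_of_notMem ht, hφ0 t ht]; ring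
  rw [hstep1, hstep2, zero_add, hstep3, hswapped, hstep4]

end IBP

section Near

lemma locallyIntegrable_mul_bdd {c h : ℝ → ℝ} (hc : Continuous c) (hm : Measurable h)
    {C : ℝ} (hCnn : 0 ≤ C) (hb : ∀ᵐ t : ℝ ∂volume, |h t| ≤ C) :
    MeasureTheory.LocallyIntegrable (fun x => c x * h x) volume := by
  intro x
  refine ⟨Metric.ball x 1, Metric.ball_mem_nhds x one_pos, ?_⟩
  obtain ⟨Mc, hMc⟩ := (isCompact_closedBall x 1).exists_bound_of_continuousOn hc.continuousOn
  have hMcnn : 0 ≤ Mc := le_trans (norm_nonneg _) (hMc x (Metric.mem_closedBall_self one_pos.le))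
  apply Measure.integrableOn_of_bounded (M := Mc * C) (measure_ball_lt_top).ne
    ((hc.measurable.mul hm).aestronglyMeasurable)
  rw [ae_restrict_iff' measurableSet_ball]
  filter_upwards [hb] with y hy hymem
  have h1 : |c y| ≤ Mc := by
    simpa [Real.norm_eq_abs] using hMc y (Metric.ball_subset_closedBall hymem)
  calc ‖c y * h y‖ = |c y| * |h y| := by rw [Real.norm_eq_abs, abs_mul]
    _ ≤ Mc * C := mul_le_mul h1 hy (abs_nonneg _) hMcnn

lemma essim_near {n : ℕ} {v : ℝ → Fin n → ℝ} {z : Fin n → ℝ} {J : Set ℝ}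
    (hz : z ∈ essimOn v J) {P : ℝ → Prop} (hP : ∀ᵐ ξ : ℝ ∂volume, P ξ)
    {ε : ℝ} (hε : 0 < ε) :
    ∃ ξ : ℝ, ξ ∈ J ∧ P ξ ∧ dist (v ξ) z < ε := by
  have hpos := hz (Metric.ball z ε) Metric.isOpen_ball (Metric.mem_ball_self hε)
  have hPnull : volume {ξ : ℝ | ¬ P ξ} = 0 := by simpa [ae_iff] using hP
  have hne : volume ((v ⁻¹' Metric.ball z ε ∩ J) ∩ {ξ | P ξ}) ≠ 0 := by
    intro h0
    have hsub : v ⁻¹' Metric.ball z ε ∩ J ⊆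
        ((v ⁻¹' Metric.ball z ε ∩ J) ∩ {ξ | P ξ}) ∪ {ξ : ℝ | ¬ P ξ} := by
      intro ξ hξ
      by_cases hPξ : P ξ
      · exact Or.inl ⟨hξ, hPξ⟩
      · exact Or.inr hPξ
    have hnull2 : volume ((v ⁻¹' Metric.ball z ε ∩ J ∩ {ξ | P ξ}) ∪ {ξ : ℝ | ¬ P ξ}) = 0 :=
      measure_union_null h0 hPnull
    exact absurd (measure_mono_null hsub hnull2) (ne_of_gt hpos)
  obtain ⟨ξ, hξ⟩ := MeasureTheory.nonempty_of_measure_ne_zero hne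
  exact ⟨ξ, hξ.1.2, hξ.2, by simpa [Metric.mem_ball] using hξ.1.1⟩

lemma smul_single_dotProduct {n : ℕ} (a : ℝ) (i : Fin n) (w : Fin n → ℝ) :
    dotProduct (a • (Pi.single i (1:ℝ) : Fin n → ℝ)) w = a * w i := by
  simp [dotProduct, Pi.single_apply, mul_ite, ite_mul, Finset.sum_ite_eq']

end Near


/-- At an ess-im discontinuity point there exist distinct left and
right accumulation states, and for any such pair the averaged matrix
`M(u⁻, ξ⋆, u⁺)` is singular. -/
theorem distinct_states_and_singular_M_at_discontinuity
    {n : ℕ} (U : Set (Fin n → ℝ)) (hU : IsOpen U)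
    (f : (Fin n → ℝ) → (Fin n → ℝ)) (hf : ContDiffOn ℝ 2 f U)
    (hconv : convexHull ℝ (USH f U) ⊆ U)
    (v : ℝ → (Fin n → ℝ)) (hv : IsReducedState f U v)
    (hsol : IsSSWeakSol f v)
    (ξs : ℝ) (hdisc : ¬ EssImContPt v ξs) :
    (∃ um ∈ AessL v ξs, ∃ up ∈ AessR v ξs, up ≠ um) ∧
      ∀ um ∈ AessL v ξs, ∀ up ∈ AessR v ξs, up ≠ um →
        LinearMap.det (Mmat f um ξs up).toLinearMap = 0 := by
  obtain ⟨hmeas, ⟨C₀, hC₀⟩, hessim⟩ := hv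
  set C : ℝ := max C₀ 0 with hCdef
  have hC : ∀ᵐ ξ : ℝ ∂volume, ‖v ξ‖ ≤ C :=
    hC₀.mono (fun ξ h => le_trans h (le_max_left _ _))
  have hCnn : (0:ℝ) ≤ C := le_max_right _ _
  set E : Set (Fin n → ℝ) := essimOn v Set.univ with hEdef
  have hEclosed : IsClosed E := essimOn_closed v _
  have hEU : E ⊆ U := fun u hu => (hessim hu).1
  have haeE : ∀ᵐ ξ : ℝ ∂volume, v ξ ∈ E := ae_mem_essimOn v
  -- continuous extension `F` of `f` from `E` to all of `ℝⁿ`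
  have hfE : Continuous (E.restrict f) := ((hf.continuousOn).mono hEU).restrict
  obtain ⟨F, hFrestr⟩ := ContinuousMap.exists_restrict_eq hEclosed ⟨E.restrict f, hfE⟩
  have hFeq : ∀ u ∈ E, F u = f u := by
    intro u hu
    have := DFunLike.congr_fun hFrestr (⟨u, hu⟩ : E)
    exact this
  obtain ⟨MF₀, hMF₀⟩ := (isCompact_closedBall (0 : Fin n → ℝ) C).exists_bound_of_continuousOn
      F.continuous.continuousOn
  set MF : ℝ := max MF₀ 0 with hMFdef
  have hMFnn : (0:ℝ) ≤ MF := le_max_right _ _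
  have hFvb : ∀ᵐ ξ : ℝ ∂volume, ‖F (v ξ)‖ ≤ MF := by
    filter_upwards [hC] with ξ hξ
    exact le_trans (hMF₀ _ (by simpa [Metric.mem_closedBall, dist_zero_right] using hξ))
      (le_max_left _ _)
  -- components of v
  have hbmeas : ∀ i, Measurable (fun ξ => v ξ i) := fun i => (measurable_pi_apply i).comp hmeas
  have hbbound : ∀ i, ∀ᵐ ξ : ℝ ∂volume, |v ξ i| ≤ C := by
    intro i
    filter_upwards [hC] with ξ hξ
    exact le_trans (by simpa [Real.norm_eq_abs] using norm_le_pi_norm (v ξ) i) hξ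
  have hbloc : ∀ i, MeasureTheory.LocallyIntegrable (fun ξ => v ξ i) volume :=
    fun i => locallyIntegrable_of_ae_bound (hbmeas i) (hbbound i)
  have hbii : ∀ i, ∀ a c : ℝ, IntervalIntegrable (fun ξ => v ξ i) volume a c :=
    fun i => intervalIntegrable_of_locallyIntegrable (hbloc i)
  set W : ℝ → (Fin n → ℝ) := fun ξ i => ∫ t in (0:ℝ)..ξ, v t i with hWdef
  have hWcont : Continuous W :=
    continuous_pi (fun i => intervalIntegral.continuous_primitive (hbii i) 0)
  have hFvmeas : ∀ i, Measurable (fun ξ => F (v ξ) i) :=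
    fun i => (measurable_pi_apply i).comp (F.continuous.measurable.comp hmeas)
  have hFvib : ∀ i, ∀ᵐ ξ : ℝ ∂volume, |F (v ξ) i| ≤ MF := by
    intro i
    filter_upwards [hFvb] with ξ hξ
    exact le_trans (by simpa [Real.norm_eq_abs] using norm_le_pi_norm (F (v ξ)) i) hξ
  have hgloc : ∀ i, MeasureTheory.LocallyIntegrable
      (fun ξ => F (v ξ) i - ξ * v ξ i) volume := by
    intro i
    exact (locallyIntegrable_of_ae_bound (hFvmeas i) (hFvib i)).sub
      (locallyIntegrable_mul_bdd continuous_id (hbmeas i) hCnn (hbbound i))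
  -- key : per-component a.e. constancy
  have hkey : ∀ i : Fin n, ∃ ci : ℝ, ∀ᵐ ξ : ℝ ∂volume,
      F (v ξ) i - ξ * v ξ i + (∫ t in (0:ℝ)..ξ, v t i) = ci := by
    intro i
    have hViCont : Continuous (fun ξ : ℝ => ∫ t in (0:ℝ)..ξ, v t i) :=
      intervalIntegral.continuous_primitive (hbii i) 0
    have hGloc : MeasureTheory.LocallyIntegrable
        (fun ξ => (F (v ξ) i - ξ * v ξ i) + ∫ t in (0:ℝ)..ξ, v t i) volume :=
      (hgloc i).add hViCont.locallyIntegrable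
    apply exists_ae_const_of_integral_deriv_mul_eq_zero hGloc
    intro φ hφ1 hφs
    have hd : Continuous (deriv φ) := (contDiff_one_iff_deriv.mp hφ1).2
    have hds : HasCompactSupport (deriv φ) := hφs.deriv
    have hi1 : MeasureTheory.Integrable (fun ξ => deriv φ ξ * (F (v ξ) i - ξ * v ξ i))
        volume := by
      simpa [smul_eq_mul] using
        (hgloc i).integrable_smul_left_of_hasCompactSupport hd hds
    have hi2 : MeasureTheory.Integrable (fun ξ => φ ξ * v ξ i) volume := by
      simpa [smul_eq_mul] using
        (hbloc i).integrable_smul_left_of_hasCompactSupport hφ1.continuous hφs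
    have hi3 : MeasureTheory.Integrable
        (fun ξ => deriv φ ξ * ∫ t in (0:ℝ)..ξ, v t i) volume :=
      (hd.mul hViCont).integrable_of_hasCompactSupport hds.mul_right
    -- weak formulation per component
    have hweak : ∫ ξ : ℝ, deriv φ ξ * (F (v ξ) i - ξ * v ξ i) = ∫ ξ : ℝ, φ ξ * v ξ i := by
      set ψ : ℝ → (Fin n → ℝ) := fun ξ => φ ξ • (Pi.single i (1:ℝ) : Fin n → ℝ) with hψdef
      have h0 := hsol ψ (hφ1.smul contDiff_const) hφs.smul_right
      have hptae : ∀ᵐ ξ : ℝ ∂volume,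
          (deriv ψ ξ) ⬝ᵥ ((-ξ) • v ξ + f (v ξ)) - (ψ ξ) ⬝ᵥ (v ξ)
            = deriv φ ξ * (F (v ξ) i - ξ * v ξ i) - φ ξ * v ξ i := by
        filter_upwards [haeE] with ξ hξ
        have hdψ : deriv ψ ξ = deriv φ ξ • (Pi.single i (1:ℝ) : Fin n → ℝ) :=
          deriv_smul_const (hφ1.differentiable one_ne_zero ξ) _
        rw [hdψ, smul_single_dotProduct, hψdef]
        show deriv φ ξ * ((-ξ) • v ξ + f (v ξ)) i
            - (φ ξ • (Pi.single i (1:ℝ) : Fin n → ℝ)) ⬝ᵥ (v ξ) = _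
        rw [smul_single_dotProduct]
        have hfF : f (v ξ) = F (v ξ) := (hFeq _ hξ).symm
        simp only [Pi.add_apply, Pi.smul_apply, smul_eq_mul, hfF]
        ring
      rw [MeasureTheory.integral_congr_ae hptae, MeasureTheory.integral_sub hi1 hi2] at h0
      linarith
    have hIBP := integral_deriv_mul_primitive (hbmeas i) hCnn (hbbound i) hφ1 hφs
    have hsplit : ∫ ξ : ℝ, deriv φ ξ * ((F (v ξ) i - ξ * v ξ i) + ∫ t in (0:ℝ)..ξ, v t i)
        = (∫ ξ : ℝ, deriv φ ξ * (F (v ξ) i - ξ * v ξ i))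
          + ∫ ξ : ℝ, deriv φ ξ * ∫ t in (0:ℝ)..ξ, v t i := by
      rw [← MeasureTheory.integral_add hi1 hi3]
      congr 1 with ξ
      ring
    rw [hsplit, hweak, hIBP]
    ring
  choose cvec hcvec using hkey
  have hall : ∀ᵐ ξ : ℝ ∂volume, ∀ i : Fin n,
      F (v ξ) i - ξ * v ξ i + (∫ t in (0:ℝ)..ξ, v t i) = cvec i :=
    (MeasureTheory.ae_all_iff).mpr hcvec
  set Φm : (Fin n → ℝ) × ℝ → (Fin n → ℝ) := fun p => F p.1 - p.2 • p.1 + W p.2 with hΦmdef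
  have hΦcont : Continuous Φm :=
    ((F.continuous.comp continuous_fst).sub (continuous_snd.smul continuous_fst)).add
      (hWcont.comp continuous_snd)
  have hzae : ∀ᵐ ξ : ℝ ∂volume, Φm (v ξ, ξ) = cvec := by
    filter_upwards [hall] with ξ hξ
    funext i
    show (F (v ξ) - ξ • v ξ + W ξ) i = cvec i
    simp only [Pi.add_apply, Pi.sub_apply, Pi.smul_apply, smul_eq_mul]
    exact hξ i
  -- limit values on the left and on the right
  have hlimL : ∀ z ∈ AessL v ξs, Φm (z, ξs) = cvec := by
    intro z hz
    by_contra hne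
    have hdist : 0 < dist cvec (Φm (z, ξs)) := dist_pos.mpr (fun h => hne h.symm)
    obtain ⟨δ, hδpos, hball⟩ := Metric.continuousAt_iff.mp hΦcont.continuousAt _ hdist
    have hzJ := mem_iInter₂.mp hz δ hδpos
    obtain ⟨ξ, hξJ, hPξ, hvd⟩ := essim_near hzJ hzae hδpos
    rw [mem_Ioo] at hξJ
    have h1 : dist (v ξ, ξ) (z, ξs) < δ := by
      rw [Prod.dist_eq]
      apply max_lt hvd
      rw [Real.dist_eq, abs_lt]
      constructor <;> linarith [hξJ.1, hξJ.2]
    have h2 := hball h1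
    rw [hPξ] at h2
    exact absurd h2 (lt_irrefl _)
  have hlimR : ∀ z ∈ AessR v ξs, Φm (z, ξs) = cvec := by
    intro z hz
    by_contra hne
    have hdist : 0 < dist cvec (Φm (z, ξs)) := dist_pos.mpr (fun h => hne h.symm)
    obtain ⟨δ, hδpos, hball⟩ := Metric.continuousAt_iff.mp hΦcont.continuousAt _ hdist
    have hzJ := mem_iInter₂.mp hz δ hδpos
    obtain ⟨ξ, hξJ, hPξ, hvd⟩ := essim_near hzJ hzae hδpos
    rw [mem_Ioo] at hξJ
    have h1 : dist (v ξ, ξ) (z, ξs) < δ := by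
      rw [Prod.dist_eq]
      apply max_lt hvd
      rw [Real.dist_eq, abs_lt]
      constructor <;> linarith [hξJ.1, hξJ.2]
    have h2 := hball h1
    rw [hPξ] at h2
    exact absurd h2 (lt_irrefl _)
  constructor
  · -- existence of a distinct pair
    obtain ⟨zm, hzm⟩ := AessL_nonempty (v := v) (ξ := ξs) hC
    obtain ⟨zp, hzp⟩ := AessR_nonempty (v := v) (ξ := ξs) hC
    by_cases hex : ∃ um ∈ AessL v ξs, ∃ up ∈ AessR v ξs, up ≠ um
    · exact hex
    · exfalso
      apply hdisc
      push_neg at hex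
      refine ⟨zp, ?_, ?_⟩
      · ext x
        simp only [mem_singleton_iff]
        constructor
        · intro hx; exact (hex x hx zp hzp).symm
        · intro hx; rw [hx, hex zm hzm zp hzp]; exact hzm
      · ext x
        simp only [mem_singleton_iff]
        constructor
        · intro hx; exact (hex zm hzm x hx).trans (hex zm hzm zp hzp).symm
        · intro hx; rw [hx]; exact hzp
  · -- singularity of the averaged matrix
    intro um humem up hupmem hne
    have humE : um ∈ E := AessL_subset humem
    have hupE : up ∈ E := AessR_subset hupmem
    have h1 : F um - ξs • um + W ξs = cvec := hlimL um humem
    have h2 : F up - ξs • up + W ξs = cvec := hlimR up hupmem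
    rw [hFeq um humE] at h1
    rw [hFeq up hupE] at h2
    have hkeyv : f up - ξs • up = f um - ξs • um := add_right_cancel (h2.trans h1.symm)
    have h3 : f up - f um = ξs • up - ξs • um := sub_eq_sub_iff_sub_eq_sub.mpr hkeyv
    set d : Fin n → ℝ := up - um with hddef
    have hd : d ≠ 0 := sub_ne_zero.mpr hne
    set γ : ℝ → (Fin n → ℝ) := fun τ => um + τ • d with hγdef
    have humSH : um ∈ USH f U := hessim humE
    have hupSH : up ∈ USH f U := hessim hupE
    have hseg : ∀ τ ∈ Icc (0:ℝ) 1, γ τ ∈ U := by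
      intro τ hτ
      apply hconv
      apply (convex_convexHull ℝ (USH f U)).segment_subset
        (subset_convexHull ℝ _ humSH) (subset_convexHull ℝ _ hupSH)
      refine ⟨1 - τ, τ, by linarith [hτ.2], hτ.1, by ring, ?_⟩
      funext i
      simp only [hγdef, hddef, Pi.add_apply, Pi.smul_apply, Pi.sub_apply, smul_eq_mul]
      ring
    have hγd : ∀ τ : ℝ, HasDerivAt γ d τ := by
      intro τ
      have := ((hasDerivAt_id τ).smul_const d).const_add um
      simpa only [id, one_smul] using this
    have hγcont : Continuous γ := continuous_const.add (continuous_id.smul continuous_const)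
    have hsegu : ∀ τ ∈ uIcc (0:ℝ) 1, γ τ ∈ U := by
      intro τ hτ
      exact hseg τ (by rwa [uIcc_of_le zero_le_one] at hτ)
    have hfd : ∀ τ ∈ uIcc (0:ℝ) 1,
        HasDerivAt (fun τ => f (γ τ)) ((fderiv ℝ f (γ τ)) d) τ := by
      intro τ hτ
      have hdf : DifferentiableAt ℝ f (γ τ) :=
        (hf.differentiableOn (by norm_num)).differentiableAt (hU.mem_nhds (hsegu τ hτ))
      exact hdf.hasFDerivAt.comp_hasDerivAt τ (hγd τ)
    have hAcont : ContinuousOn (fun τ : ℝ => fderiv ℝ f (γ τ)) (uIcc (0:ℝ) 1) :=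
      (hf.continuousOn_fderiv_of_isOpen hU (by norm_num)).comp
        hγcont.continuousOn hsegu
    have hAint : IntervalIntegrable (fun τ : ℝ => fderiv ℝ f (γ τ)) volume 0 1 :=
      hAcont.intervalIntegrable
    have hintg : (fun τ : ℝ => fderiv ℝ f ((1 - τ) • um + τ • up))
        = fun τ : ℝ => fderiv ℝ f (γ τ) := by
      funext τ
      congr 1
      funext i
      simp only [hγdef, hddef, Pi.add_apply, Pi.smul_apply, Pi.sub_apply, smul_eq_mul]
      ring
    have hFTC : ∫ τ in (0:ℝ)..(1:ℝ), (fderiv ℝ f (γ τ)) d = f up - f um := by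
      rw [intervalIntegral.integral_eq_sub_of_hasDerivAt hfd
        ((hAcont.clm_apply continuousOn_const).intervalIntegrable)]
      have hγ1 : γ 1 = up := by
        funext i
        simp only [hγdef, hddef, Pi.add_apply, Pi.smul_apply, Pi.sub_apply, smul_eq_mul]
        ring
      have hγ0 : γ 0 = um := by
        funext i
        simp only [hγdef, hddef, Pi.add_apply, Pi.smul_apply, Pi.sub_apply, smul_eq_mul]
        ring
      rw [hγ1, hγ0]
    have hM : (Mmat f um ξs up) d = 0 := by
      show (-(ξs • (1 : (Fin n → ℝ) →L[ℝ] (Fin n → ℝ))) +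
        ∫ τ in (0:ℝ)..(1:ℝ), fderiv ℝ f ((1 - τ) • um + τ • up)) d = 0
      rw [ContinuousLinearMap.add_apply, ContinuousLinearMap.neg_apply,
        ContinuousLinearMap.smul_apply, ContinuousLinearMap.one_apply, hintg,
        ContinuousLinearMap.intervalIntegral_apply hAint d, hFTC, h3]
      rw [← smul_sub]
      exact neg_add_cancel _
    have h53 := (LinearMap.hasEigenvalue_zero_tfae
      ((Mmat f um ξs up).toLinearMap : (Fin n → ℝ) →ₗ[ℝ] (Fin n → ℝ))).out 5 3
    exact h53.mp ⟨d, hd, hM⟩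

end
end

section
/- Let h : ℝ^p → ℝ^n be Lebesgue measurable, let Y ⊆ ℝ^p be open, and suppose h restricted to Y is essentially bounded. Then for every y ∈ Y the ess-im accumulation set A(h; y) is nonempty and compact, and h(y) ∈ A(h; y) for almost every y ∈ Y. -/
open MeasureTheory Set Matrix

noncomputable section

/-- The ess-im accumulation set of `h : ℝ^p → ℝ^n` at a point `y`. -/
def AessP {p n : ℕ} (h : (Fin p → ℝ) → (Fin n → ℝ)) (y : Fin p → ℝ) :
    Set (Fin n → ℝ) :=
  ⋂ r > (0:ℝ), essimOn h (Metric.ball y r)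

/-!
`essimOn h S` is the support of the push-forward of `volume.restrict S` under `h`: it is closed,
contained in every closed set containing `h x` for a.e. `x ∈ S`, and nonempty unless `S` is null.
Near `y ∈ Y` these sets are bounded, so `A(h; y)` is a nested intersection of nonempty compact
sets. For the a.e. statement, a.e. point `(y, h y)` of the graph of `h` lies in the support of the
push-forward of `volume` to the graph, and its neighbourhood `U ×ˢ V` has measure
`volume (U ∩ h ⁻¹' V)`.
-/

open Filter Topology Metric

section EssentialImage

variable {α : Type*} [MeasureSpace α] {n : ℕ} {h : α → (Fin n → ℝ)} {S T : Set α}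

lemma essimOn_mono_s18 (hST : S ⊆ T) : essimOn h S ⊆ essimOn h T :=
  fun _ hz V hV hzV => (hz V hV hzV).trans_le (measure_mono (inter_subset_inter_right _ hST))

lemma essimOn_eq_support_map (hh : Measurable h) :
    essimOn h S = ((volume.restrict S).map h).support := by
  ext z
  have hmap (V : Set (Fin n → ℝ)) (hV : IsOpen V) :
      (volume.restrict S).map h V = volume (h ⁻¹' V ∩ S) := by
    rw [Measure.map_apply hh hV.measurableSet, Measure.restrict_apply (hh hV.measurableSet)]
  simp only [Measure.support_eq_forall_isOpen, essimOn, mem_ofPred_eq]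
  exact forall_congr' fun V => ⟨fun hz hzV hV => hmap V hV ▸ hz hV hzV,
    fun hz hV hzV => hmap V hV ▸ hz hzV hV⟩

lemma isClosed_essimOn (hh : Measurable h) : IsClosed (essimOn h S) :=
  essimOn_eq_support_map hh ▸ Measure.isClosed_support

lemma essimOn_subset_of_ae_mem (hh : Measurable h) {K : Set (Fin n → ℝ)} (hK : IsClosed K)
    (hhK : ∀ᵐ x ∂volume.restrict S, h x ∈ K) : essimOn h S ⊆ K :=
  essimOn_eq_support_map hh ▸
    Measure.support_subset_of_isClosed hK ((mem_ae_map_iff hh.aemeasurable hK.measurableSet).2 hhK)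

lemma essimOn_nonempty_s18 (hh : Measurable h) (hS : volume S ≠ 0) : (essimOn h S).Nonempty := by
  rw [essimOn_eq_support_map hh]
  exact Measure.nonempty_support (by simpa [Measure.map_eq_zero_iff hh.aemeasurable] using hS)

lemma ae_forall_mem_essimOn_of_isOpen [TopologicalSpace α] [SecondCountableTopology α]
    [OpensMeasurableSpace α] (hh : AEMeasurable h) :
    ∀ᵐ y, ∀ U, IsOpen U → y ∈ U → h y ∈ essimOn h U := by
  have hgraph : AEMeasurable (fun y => (y, h y)) := aemeasurable_id.prodMk hh
  filter_upwards [ae_of_ae_map hgraph (Measure.support_mem_ae (μ := volume.map _))]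
    with y hy U hU hyU V hV hyV
  have hpos := (Measure.mem_support_iff_forall _).1 hy _ (prod_mem_nhds (hU.mem_nhds hyU)
    (hV.mem_nhds hyV))
  rwa [Measure.map_apply_of_aemeasurable hgraph (hU.measurableSet.prod hV.measurableSet),
    mk_preimage_prod, inter_comm] at hpos

end EssentialImage

section AccumulationSet

variable {p n : ℕ} {h : (Fin p → ℝ) → (Fin n → ℝ)} {y : Fin p → ℝ} {r : ℝ}
  {K : Set (Fin n → ℝ)}

lemma AessP_subset_essimOn (hr : 0 < r) : AessP h y ⊆ essimOn h (ball y r) :=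
  biInter_subset_of_mem (t := fun r => essimOn h (ball y r)) hr

lemma isCompact_AessP (hh : Measurable h) (hr : 0 < r) (hK : IsCompact K)
    (hhK : ∀ᵐ x ∂volume.restrict (ball y r), h x ∈ K) : IsCompact (AessP h y) :=
  hK.of_isClosed_subset (isClosed_biInter fun _ _ => isClosed_essimOn hh)
    ((AessP_subset_essimOn hr).trans (essimOn_subset_of_ae_mem hh hK.isClosed hhK))

lemma AessP_nonempty (hh : Measurable h) (hr : 0 < r) (hK : IsCompact K)
    (hhK : ∀ᵐ x ∂volume.restrict (ball y r), h x ∈ K) : (AessP h y).Nonempty := by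
  let t : Ioc 0 r → Set (Fin n → ℝ) := fun s => essimOn h (ball y s)
  have : Nonempty (Ioc 0 r) := ⟨⟨r, hr, le_rfl⟩⟩
  have ht_compact (s : Ioc 0 r) : IsCompact (t s) :=
    hK.of_isClosed_subset (isClosed_essimOn hh) (essimOn_subset_of_ae_mem hh hK.isClosed
      (ae_restrict_of_ae_restrict_of_subset (ball_subset_ball s.2.2) hhK))
  obtain ⟨z, hz⟩ := IsCompact.nonempty_iInter_of_directed_nonempty_isCompact_isClosed t
    (Monotone.directed_ge fun s s' hss' => essimOn_mono_s18 (ball_subset_ball hss'))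
    (fun s => essimOn_nonempty_s18 hh (measure_ball_pos volume y s.2.1).ne') ht_compact
    (fun s => (ht_compact s).isClosed)
  refine ⟨z, mem_iInter₂.2 fun s hs => ?_⟩
  exact essimOn_mono_s18 (ball_subset_ball (min_le_left s r))
    (mem_iInter.1 hz ⟨min s r, lt_min hs hr, min_le_right s r⟩)

lemma ae_mem_AessP (hh : Measurable h) : ∀ᵐ y, h y ∈ AessP h y := by
  filter_upwards [ae_forall_mem_essimOn_of_isOpen hh.aemeasurable] with y hy
  exact mem_iInter₂.2 fun r hr => hy _ isOpen_ball (mem_ball_self hr)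

end AccumulationSet

/-- For measurable `h : ℝ^p → ℝ^n` essentially bounded on an open
set `Y`, the ess-im accumulation set `A(h; y)` is nonempty and compact for every
`y ∈ Y`, and `h(y) ∈ A(h; y)` for a.e. `y ∈ Y`. -/
theorem aess_nonempty_compact_and_ae_mem
    {p n : ℕ} (h : (Fin p → ℝ) → (Fin n → ℝ)) (hmeas : Measurable h)
    (Y : Set (Fin p → ℝ)) (hYopen : IsOpen Y)
    (hbd : ∃ C : ℝ, ∀ᵐ y ∂(volume.restrict Y), ‖h y‖ ≤ C) :
    (∀ y ∈ Y, (AessP h y).Nonempty ∧ IsCompact (AessP h y)) ∧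
      ∀ᵐ y ∂(volume.restrict Y), h y ∈ AessP h y := by
  obtain ⟨C, hC⟩ := hbd
  refine ⟨fun y hy => ?_, ae_restrict_of_ae (ae_mem_AessP hmeas)⟩
  obtain ⟨r, hr, hball⟩ := Metric.isOpen_iff.1 hYopen y hy
  have hbound : ∀ᵐ x ∂volume.restrict (ball y r), h x ∈ closedBall 0 C :=
    (ae_restrict_of_ae_restrict_of_subset hball hC).mono fun _ => mem_closedBall_zero_iff.2
  exact ⟨AessP_nonempty hmeas hr (isCompact_closedBall 0 C) hbound,
    isCompact_AessP hmeas hr (isCompact_closedBall 0 C) hbound⟩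

end
end
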